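/- Let n, n_u, n_y be even positive integers with n_y = n_u, and let Ã ∈ ℝ^{n×n}, B̃_u ∈ ℝ^{n×n_u}, C̃ ∈ ℝ^{n_y×n} be real matrices. Suppose the algebraic Riccati equation X B̃_u Θ_{n_u} B̃_uᵀ X − Ãᵀ X − X Ã − C̃ᵀ Θ_{n_y} C̃ = 0 has a nonsingular, real, skew-symmetric solution X. Then there exists a real invertible matrix T ∈ ℝ^{n×n} such that, setting A = T Ã T⁻¹, B_u = T B̃_u, and C = C̃ T⁻¹ (so that C(sI − A)⁻¹B_u = C̃(sI − Ã)⁻¹B̃_u), one has Θ_n B_u Θ_{n_u} B_uᵀ Θ_n − Θ_n A − Aᵀ Θ_n − Cᵀ Θ_{n_y} C = 0; consequently the system (A, B_u, C) with B_{v1} = Θ_n Cᵀ Θ_{n_y} and no additional noise matrix B_{v2} is physically realizable. (Theorem 3.) -/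

import Mathlib

/-!
A nonsingular skew-symmetric `X` is congruent to `Θ_n` (Darboux): for `e ≠ 0` pick `f` with
`eᵀ X f = 1`; the plane `span {e, f}` is nondegenerate, so `ℝⁿ` splits as this plane plus its
`X`-orthogonal complement, on which one recurses. With `Sᵀ X S = Θ_n` and `T = S⁻¹`,
congruence by `S` turns the Riccati equation for `X` into the same equation with `Θ_n` in
place of `X` for the similar system `(T Ã T⁻¹, T B̃, C̃ T⁻¹)`, which has the same transfer
function. Conjugating that equation by `Θ_n` and using `Θ² = -1` gives the realizability
identity.
-/

open Matrix

noncomputable section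

/-- The canonical `k × k` block-diagonal skew-symmetric matrix
`Θ_k = diag(J, …, J)` with `J = [[0,1],[-1,0]]` (for `k` even). -/
def ThetaM (k : ℕ) : Matrix (Fin k) (Fin k) ℝ :=
  Matrix.of fun i j =>
    if j.val = i.val + 1 ∧ i.val % 2 = 0 then 1
    else if i.val = j.val + 1 ∧ j.val % 2 = 0 then -1
    else 0

/-- The complexification of a real matrix. -/
def toC {m n : ℕ} (M : Matrix (Fin m) (Fin n) ℝ) : Matrix (Fin m) (Fin n) ℂ :=
  M.map Complex.ofReal

open Module
open LinearMap (BilinForm)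

lemma thetaM_transpose (k : ℕ) : (ThetaM k)ᵀ = -ThetaM k := by
  ext i j
  simp only [ThetaM, transpose_apply, of_apply, Matrix.neg_apply]
  split_ifs <;> first | (exfalso; omega) | norm_num

lemma reindex_fromBlocks_thetaM (m : ℕ) :
    reindex finSumFinEquiv finSumFinEquiv (fromBlocks (ThetaM 2) 0 0 (ThetaM m)) =
      ThetaM (2 + m) := by
  ext i j
  rw [reindex_apply, submatrix_apply]
  refine Fin.addCases (fun i => ?_) (fun i => ?_) i <;>
    refine Fin.addCases (fun j => ?_) (fun j => ?_) j <;>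
    simp only [finSumFinEquiv_symm_apply_castAdd, finSumFinEquiv_symm_apply_natAdd,
      fromBlocks_apply₁₁, fromBlocks_apply₁₂, fromBlocks_apply₂₁, fromBlocks_apply₂₂,
      Matrix.zero_apply, ThetaM, of_apply, Fin.val_castAdd, Fin.val_natAdd] <;>
    split_ifs <;> first | (exfalso; omega) | rfl

lemma thetaM_two_mul_self : ThetaM 2 * ThetaM 2 = -1 := by
  ext i j; fin_cases i <;> fin_cases j <;> simp [ThetaM, mul_apply, Fin.sum_univ_two]

lemma thetaM_mul_self {k : ℕ} (hk : Even k) : ThetaM k * ThetaM k = -1 := by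
  obtain ⟨m, rfl⟩ := hk
  induction m with
  | zero => ext i; exact i.elim0
  | succ m ih =>
    rw [show m + 1 + (m + 1) = 2 + (m + m) by ring, ← reindex_fromBlocks_thetaM,
      ← coe_reindexAlgEquiv ℝ ℝ, ← map_mul, fromBlocks_multiply]
    simp only [thetaM_two_mul_self, ih, Matrix.mul_zero, Matrix.zero_mul, add_zero, zero_add]
    have hblocks :
        (fromBlocks (-1) 0 0 (-1) : Matrix (Fin 2 ⊕ Fin (m + m)) (Fin 2 ⊕ Fin (m + m)) ℝ) = -1 := by
      rw [← fromBlocks_one, fromBlocks_neg, neg_zero, neg_zero]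
    rw [hblocks, map_neg, map_one]

namespace LinearMap.BilinForm

variable {R M : Type*} [CommRing R] [AddCommGroup M] [Module R M] {B : BilinForm R M}

lemma linearIndependent_pair_of_isAlt (hAlt : B.IsAlt) {e f : M} (hef : B e f = 1) :
    LinearIndependent R ![e, f] := by
  refine LinearIndependent.pair_iff.mpr fun s t hst => ⟨?_, ?_⟩
  · simpa [hAlt f, hef] using congrArg (fun v => B v f) hst
  · simpa [hAlt e, hef] using congrArg (B e) hst

lemma toMatrix_map_prodEquivOfIsCompl {ι κ : Type*} [Fintype ι] [Fintype κ] [DecidableEq ι]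
    [DecidableEq κ] (hRefl : B.IsRefl) {P Q : Submodule R M} (h : IsCompl P Q)
    (hQ : Q ≤ B.orthogonal P) (bP : Basis ι R P) (bQ : Basis κ R Q) :
    toMatrix ((bP.prod bQ).map (P.prodEquivOfIsCompl Q h)) B =
      fromBlocks (toMatrix bP (B.restrict P)) 0 0 (toMatrix bQ (B.restrict Q)) := by
  have hPQ (i : ι) (j : κ) : B (bP i) (bQ j) = 0 :=
    mem_orthogonal_iff.mp (hQ (bQ j).2) _ (bP i).2
  ext (i | i) (j | j) <;>
    simp [toMatrix_apply, Submodule.coe_prodEquivOfIsCompl', hPQ, hRefl.eq_zero (hPQ _ _)]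

lemma toMatrix_basis_reindex {ι κ : Type*} [Fintype ι] [Fintype κ] [DecidableEq ι]
    [DecidableEq κ] (b : Basis ι R M) (e : ι ≃ κ) :
    toMatrix (b.reindex e) B = reindex e e (toMatrix b B) := by
  ext i j
  simp [toMatrix_apply]

section Real

variable {V : Type*} [AddCommGroup V] [Module ℝ V] {B : BilinForm ℝ V}

lemma toMatrix_span_pair_eq_thetaM (hAlt : B.IsAlt) {e f : V} (hef : B e f = 1) :
    toMatrix (Basis.span (linearIndependent_pair_of_isAlt hAlt hef))
      (B.restrict (Submodule.span ℝ (Set.range ![e, f]))) = ThetaM 2 := by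
  have hfe : B f e = -1 := by rw [← hAlt.neg_eq, hef]
  ext i j
  fin_cases i <;> fin_cases j <;>
    simp [toMatrix_apply, Basis.span_apply, ThetaM, hAlt e, hAlt f, hef, hfe]

variable [FiniteDimensional ℝ V]

theorem exists_basis_toMatrix_eq_thetaM (hB : B.Nondegenerate) (hAlt : B.IsAlt) {n : ℕ}
    (hn : finrank ℝ V = n) : ∃ b : Basis (Fin n) ℝ V, toMatrix b B = ThetaM n := by
  induction n using Nat.strong_induction_on generalizing V with
  | _ n ih =>
  rcases Nat.eq_zero_or_pos n with rfl | hpos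
  · exact ⟨finBasisOfFinrankEq ℝ V hn, by ext i; exact i.elim0⟩
  have : Nontrivial V := nontrivial_of_finrank_pos (hn ▸ hpos)
  obtain ⟨e, he⟩ := exists_ne (0 : V)
  obtain ⟨f, hef⟩ : ∃ f, B e f = 1 := by
    obtain ⟨y, hy⟩ : ∃ y, B e y ≠ 0 := not_forall.mp fun h => he (hB.1 e h)
    exact ⟨(B e y)⁻¹ • y, by simp [hy]⟩
  set P := Submodule.span ℝ (Set.range ![e, f])
  set bP := Basis.span (linearIndependent_pair_of_isAlt hAlt hef)
  have hP : (B.restrict P).Nondegenerate := by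
    refine nondegenerate_of_det_ne_zero _ bP ?_
    rw [toMatrix_span_pair_eq_thetaM hAlt hef]
    exact det_ne_zero_of_right_inverse (B := -ThetaM 2) (by simp [thetaM_two_mul_self])
  have hPQ : IsCompl P (B.orthogonal P) :=
    isCompl_orthogonal_of_restrict_nondegenerate hAlt.isRefl hP
  have hQ : (B.restrict (B.orthogonal P)).Nondegenerate := by
    refine nondegenerate_restrict_of_disjoint_orthogonal _ hAlt.isRefl ?_
    rw [orthogonal_orthogonal hB hAlt.isRefl]
    exact hPQ.disjoint.symm
  have hdim : 2 + finrank ℝ (B.orthogonal P) = n := by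
    rw [← hn, ← Submodule.finrank_add_eq_of_isCompl hPQ, finrank_eq_card_basis bP,
      Fintype.card_fin]
  obtain ⟨bQ, hbQ⟩ := ih _ (by omega) hQ (fun x => hAlt x) rfl
  subst hdim
  refine ⟨((bP.prod bQ).map (P.prodEquivOfIsCompl _ hPQ)).reindex finSumFinEquiv, ?_⟩
  rw [toMatrix_basis_reindex, toMatrix_map_prodEquivOfIsCompl hAlt.isRefl hPQ le_rfl,
    toMatrix_span_pair_eq_thetaM hAlt hef, hbQ, reindex_fromBlocks_thetaM]

end Real

end LinearMap.BilinForm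

namespace Matrix

section Skew

variable {R : Type*} [CommRing R] [IsAddTorsionFree R] {ι : Type*} [Fintype ι] [DecidableEq ι]

lemma isAlt_toBilin'_of_transpose_eq_neg {X : Matrix ι ι R} (hX : Xᵀ = -X) :
    (toBilin' X).IsAlt := fun x => by
  have h : x ⬝ᵥ X *ᵥ x = -(x ⬝ᵥ X *ᵥ x) := by
    conv_lhs => rw [dotProduct_mulVec, ← mulVec_transpose, hX, neg_mulVec, neg_dotProduct,
      dotProduct_comm]
  rw [toBilin'_apply']
  exact self_eq_neg.mp h

end Skew

theorem exists_isUnit_transpose_mul_mul_eq_thetaM {n : ℕ} {X : Matrix (Fin n) (Fin n) ℝ}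
    (hX : IsUnit X) (hXskew : Xᵀ = -X) :
    ∃ S : Matrix (Fin n) (Fin n) ℝ, IsUnit S ∧ Sᵀ * X * S = ThetaM n := by
  obtain ⟨b, hb⟩ := LinearMap.BilinForm.exists_basis_toMatrix_eq_thetaM
    (LinearMap.BilinForm.nondegenerate_toBilin'_of_det_ne_zero' X
      ((isUnit_iff_isUnit_det X).mp hX).ne_zero)
    (isAlt_toBilin'_of_transpose_eq_neg hXskew) (finrank_fin_fun ℝ)
  let e := Pi.basisFun ℝ (Fin n)
  have := e.invertibleToMatrix b
  refine ⟨e.toMatrix b, isUnit_of_invertible _, ?_⟩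
  rw [← hb, ← LinearMap.BilinForm.toMatrix_mul_basis_toMatrix e,
    LinearMap.BilinForm.toMatrix_basisFun, LinearMap.BilinForm.toMatrix'_toBilin']

end Matrix

section Systems

variable {R : Type*} [CommRing R] {ι κ μ : Type*} [Fintype ι] [DecidableEq ι]

def transferFunction (A : Matrix ι ι R) (B : Matrix ι κ R) (C : Matrix μ ι R) (s : R) :
    Matrix μ κ R :=
  C * (s • 1 - A)⁻¹ * B

lemma transferFunction_conj {P Q : Matrix ι ι R} (hPQ : P * Q = 1) (A : Matrix ι ι R)
    (B : Matrix ι κ R) (C : Matrix μ ι R) (s : R) :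
    transferFunction (P * A * Q) (P * B) (C * Q) s = transferFunction A B C s := by
  have hQP : Q * P = 1 := mul_eq_one_comm.mp hPQ
  have hconj : s • 1 - P * A * Q = P * (s • 1 - A) * Q := by
    rw [Matrix.mul_sub, Matrix.sub_mul, Matrix.mul_smul, Matrix.smul_mul, Matrix.mul_one, hPQ]
  rw [transferFunction, hconj, Matrix.mul_inv_rev, Matrix.mul_inv_rev, inv_eq_left_inv hPQ,
    inv_eq_left_inv hQP]
  have hcancel (N : Matrix ι κ R) : Q * (P * N) = N := by
    rw [← Matrix.mul_assoc, hQP, Matrix.one_mul]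
  simp only [transferFunction, Matrix.mul_assoc, hcancel]

variable [Fintype κ]

def riccati (X A : Matrix ι ι R) (B : Matrix ι κ R) (C : Matrix κ ι R) (Θ : Matrix κ κ R) :
    Matrix ι ι R :=
  X * B * Θ * Bᵀ * X - X * A - Aᵀ * X - Cᵀ * Θ * C

lemma transpose_mul_riccati_mul {S : Matrix ι ι R} (hS : IsUnit S) (X A : Matrix ι ι R)
    (B : Matrix ι κ R) (C : Matrix κ ι R) (Θ : Matrix κ κ R) :
    Sᵀ * riccati X A B C Θ * S =
      riccati (Sᵀ * X * S) (S⁻¹ * A * S) (S⁻¹ * B) (C * S) Θ := by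
  have hS' : IsUnit Sᵀ.det := by rwa [det_transpose, ← isUnit_iff_isUnit_det]
  rw [isUnit_iff_isUnit_det] at hS
  simp only [riccati, transpose_mul, transpose_nonsing_inv, Matrix.mul_sub, Matrix.sub_mul,
    Matrix.mul_assoc, mul_nonsing_inv_cancel_left _ _ hS, nonsing_inv_mul_cancel_left _ _ hS']

end Systems

lemma thetaM_mul_riccati_thetaM_mul_thetaM {n nu : ℕ} (hn : Even n) (hnu : Even nu)
    (A : Matrix (Fin n) (Fin n) ℝ) (B : Matrix (Fin n) (Fin nu) ℝ)
    (C : Matrix (Fin nu) (Fin n) ℝ) :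
    ThetaM n * riccati (ThetaM n) A B C (ThetaM nu) * ThetaM n =
      A * ThetaM n + ThetaM n * Aᵀ + B * ThetaM nu * Bᵀ
        + (ThetaM n * Cᵀ * ThetaM nu) * ThetaM nu * (ThetaM n * Cᵀ * ThetaM nu)ᵀ := by
  have hΘ {m : ℕ} (N : Matrix (Fin n) (Fin m) ℝ) : ThetaM n * (ThetaM n * N) = -N := by
    rw [← Matrix.mul_assoc, thetaM_mul_self hn, Matrix.neg_mul, Matrix.one_mul]
  simp only [riccati, transpose_mul, transpose_transpose, thetaM_transpose, Matrix.mul_sub,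
    Matrix.sub_mul, Matrix.mul_assoc, hΘ, thetaM_mul_self hn, thetaM_mul_self hnu,
    Matrix.mul_neg, Matrix.neg_mul, Matrix.mul_one, neg_neg]
  abel

lemma toC_mul {a b c : ℕ} (M : Matrix (Fin a) (Fin b) ℝ) (N : Matrix (Fin b) (Fin c) ℝ) :
    toC (M * N) = toC M * toC N :=
  Matrix.map_mul (f := Complex.ofRealHom)

lemma toC_mul_toC_of_mul_eq_one {a : ℕ} {M N : Matrix (Fin a) (Fin a) ℝ} (h : M * N = 1) :
    toC M * toC N = 1 := by
  rw [← toC_mul, h, toC, Matrix.map_one _ Complex.ofReal_zero Complex.ofReal_one]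

theorem riccati_skew_solution_implies_physically_realizable_general
    (n nu : ℕ) (hne : Even n) (hnue : Even nu)
    (At : Matrix (Fin n) (Fin n) ℝ) (But : Matrix (Fin n) (Fin nu) ℝ)
    (Ct : Matrix (Fin nu) (Fin n) ℝ)
    (X : Matrix (Fin n) (Fin n) ℝ) (hXinv : IsUnit X) (hXskew : Xᵀ = -X)
    (hRic : X * But * ThetaM nu * Butᵀ * X - Atᵀ * X - X * At
            - Ctᵀ * ThetaM nu * Ct = 0) :
    ∃ T : Matrix (Fin n) (Fin n) ℝ, IsUnit T ∧
      (∀ s : ℂ,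
        toC (Ct * T⁻¹) * (s • (1 : Matrix (Fin n) (Fin n) ℂ) - toC (T * At * T⁻¹))⁻¹ *
            toC (T * But)
          = toC Ct * (s • (1 : Matrix (Fin n) (Fin n) ℂ) - toC At)⁻¹ * toC But) ∧
      ThetaM n * (T * But) * ThetaM nu * (T * But)ᵀ * ThetaM n
        - ThetaM n * (T * At * T⁻¹) - (T * At * T⁻¹)ᵀ * ThetaM n
        - (Ct * T⁻¹)ᵀ * ThetaM nu * (Ct * T⁻¹) = 0 ∧
      (T * At * T⁻¹) * ThetaM n + ThetaM n * (T * At * T⁻¹)ᵀ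
        + (T * But) * ThetaM nu * (T * But)ᵀ
        + (ThetaM n * (Ct * T⁻¹)ᵀ * ThetaM nu) * ThetaM nu *
            (ThetaM n * (Ct * T⁻¹)ᵀ * ThetaM nu)ᵀ = 0 := by
  obtain ⟨S, hS, hSXS⟩ := exists_isUnit_transpose_mul_mul_eq_thetaM hXinv hXskew
  have hSdet := (isUnit_iff_isUnit_det S).mp hS
  have hRicS : riccati (ThetaM n) (S⁻¹ * At * S) (S⁻¹ * But) (Ct * S) (ThetaM nu) = 0 := by
    have hRicX : riccati X At But Ct (ThetaM nu) = 0 := by rw [← hRic, riccati]; abel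
    rw [← hSXS, ← transpose_mul_riccati_mul hS, hRicX, Matrix.mul_zero, Matrix.zero_mul]
  refine ⟨S⁻¹, isUnit_nonsing_inv_iff.mpr hS, fun s => ?_, ?_, ?_⟩ <;>
    simp only [nonsing_inv_nonsing_inv S hSdet]
  · simp only [toC_mul]
    exact transferFunction_conj (toC_mul_toC_of_mul_eq_one (nonsing_inv_mul S hSdet)) _ _ _ s
  · exact hRicS
  · rw [← thetaM_mul_riccati_thetaM_mul_thetaM hne hnue, hRicS, Matrix.mul_zero, Matrix.zero_mul]

/-- **Theorem 3.** If the algebraic Riccati equation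
`X B̃u Θ B̃uᵀ X − Ãᵀ X − X Ã − C̃ᵀ Θ C̃ = 0` has a nonsingular real skew-symmetric
solution `X`, then there is a real invertible `T` such that the state transformation
`A = TÃT⁻¹`, `Bu = TB̃u`, `C = C̃T⁻¹` preserves the transfer function and yields
`Θ Bu Θ Buᵀ Θ − Θ A − Aᵀ Θ − Cᵀ Θ C = 0`; consequently the transformed system with
`B_{v1} = Θ Cᵀ Θ` and no additional noise matrix is physically realizable. -/
theorem riccati_skew_solution_implies_physically_realizable
    (n nu : ℕ) (hn : 0 < n) (hne : Even n) (hnu : 0 < nu) (hnue : Even nu)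
    (At : Matrix (Fin n) (Fin n) ℝ) (But : Matrix (Fin n) (Fin nu) ℝ)
    (Ct : Matrix (Fin nu) (Fin n) ℝ)
    (X : Matrix (Fin n) (Fin n) ℝ) (hXinv : IsUnit X) (hXskew : Xᵀ = -X)
    (hRic : X * But * ThetaM nu * Butᵀ * X - Atᵀ * X - X * At
            - Ctᵀ * ThetaM nu * Ct = 0) :
    ∃ T : Matrix (Fin n) (Fin n) ℝ, IsUnit T ∧
      (∀ s : ℂ,
        toC (Ct * T⁻¹) * (s • (1 : Matrix (Fin n) (Fin n) ℂ) - toC (T * At * T⁻¹))⁻¹ *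
            toC (T * But)
          = toC Ct * (s • (1 : Matrix (Fin n) (Fin n) ℂ) - toC At)⁻¹ * toC But) ∧
      ThetaM n * (T * But) * ThetaM nu * (T * But)ᵀ * ThetaM n
        - ThetaM n * (T * At * T⁻¹) - (T * At * T⁻¹)ᵀ * ThetaM n
        - (Ct * T⁻¹)ᵀ * ThetaM nu * (Ct * T⁻¹) = 0 ∧
      (T * At * T⁻¹) * ThetaM n + ThetaM n * (T * At * T⁻¹)ᵀ
        + (T * But) * ThetaM nu * (T * But)ᵀ
        + (ThetaM n * (Ct * T⁻¹)ᵀ * ThetaM nu) * ThetaM nu *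
            (ThetaM n * (Ct * T⁻¹)ᵀ * ThetaM nu)ᵀ = 0 :=
  riccati_skew_solution_implies_physically_realizable_general n nu hne hnue At But Ct X hXinv hXskew
    hRic
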